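/- For all integers A, M, N, every natural number d, and every v ∈ {0,1,2,3}, one has the identity (over ℚ): Σ_{i=0}^{d} Σ_{j=0}^{d-i} Σ_{k=0}^{j} (-1)^{i+j} · 2^{d-j+k} · C(A-v, i) · C(d+3-v-i-j, d-i-j) · C(M, k) · C(N, j-k) = 2^d · P^{a,b}_d(0), where a = 3 - N - A - M and b = A + M - 4 - d. In particular, the left-hand side is independent of v ∈ {0,1,2,3}. -/

import Mathlib

/-- Generalized binomial coefficient `C(x,n) = x(x-1)⋯(x-n+1)/n!` over `ℚ`. -/
def qchoose (x : ℚ) (n : ℕ) : ℚ :=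
  (∏ i ∈ Finset.range n, (x - i)) / (n.factorial : ℚ)

/-- Constant term of the Jacobi polynomial:
`P^{a,b}_d(0) = 2^{-d} Σ_{v=0}^{d} C(d+a,v) C(d+b,d-v) (-1)^{d-v}`. -/
def jacobiZero (a b : ℚ) (d : ℕ) : ℚ :=
  (1 / 2 : ℚ) ^ d *
    ∑ v ∈ Finset.range (d + 1),
      qchoose ((d : ℚ) + a) v * qchoose ((d : ℚ) + b) (d - v) * (-1 : ℚ) ^ (d - v)

/-!
Put `b = d - i - j` and `e = j - k`, so that `i + b + k + e = d`. By upper negation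
`C(b + 3 - v, b) = (-1)^b C(v - 4, b)`, the summand is the product of the coefficients of
`X^i, X^b, X^k, X^e` in `(1 - 2X)^(A - v)`, `(1 - 2X)^(v - 4)`, `(1 - 2X)^M`, `(1 - X)^N`, so the sum is
the coefficient of `X^d` in `(1 - 2X)^(A + M - 4) (1 - X)^N`; this is where `v` drops out.
Expanding `2^r C(y, r) = Σ_s C(y, s) C(y - s, r - s)` and applying Chu–Vandermonde gives
`[X^d] (1 - 2X)^y (1 - X)^x = (-1)^d Σ_s C(y, s) C(x + y - s, d - s)`, and upper negation turns the
sum defining `2^d P^{a,b}_d(0)` into the same expression.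
-/

open Finset PowerSeries

theorem qchoose_eq_choose (x : ℚ) (n : ℕ) : qchoose x n = Ring.choose x n := by
  rw [qchoose, Ring.choose_eq_smul, ← Polynomial.aeval_eq_smeval,
    ← descPochhammer_eval_eq_prod_range]
  simp [Polynomial.aeval_def, Polynomial.eval₂_eq_eval_map, descPochhammer_map, div_eq_inv_mul]

theorem Finset.sum_range_sum_range_succ_eq_sum_range_sum_range_sub {M : Type*} [AddCommMonoid M]
    (n : ℕ) (f : ℕ → ℕ → M) :
    ∑ j ∈ range (n + 1), ∑ i ∈ range (j + 1), f i j =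
      ∑ i ∈ range (n + 1), ∑ k ∈ range (n + 1 - i), f i (i + k) := by
  rw [← sum_range_diag_flip]
  exact sum_congr rfl fun j _ => sum_congr rfl fun i hi => by
    rw [Nat.add_sub_cancel' (Nat.lt_succ_iff.mp (mem_range.mp hi))]

theorem PowerSeries.coeff_mul_eq_sum_range {R : Type*} [CommSemiring R] (φ ψ : R⟦X⟧) (n : ℕ) :
    coeff n (φ * ψ) = ∑ i ∈ range (n + 1), coeff i φ * coeff (n - i) ψ := by
  rw [coeff_mul, Nat.sum_antidiagonal_eq_sum_range_succ_mk]

section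

variable {R : Type*} [CommRing R] [BinomialRing R]

namespace Ring

theorem choose_eq_neg_one_pow_mul_choose (r : R) (n : ℕ) :
    choose r n = (-1) ^ n * choose (n - 1 - r) n := by
  rw [← neg_neg r, choose_neg, Units.smul_def, zsmul_eq_mul, Int.cast_negOnePow_natCast]
  ring_nf

theorem add_choose_eq_sum_range (r s : R) (n : ℕ) :
    choose (r + s) n = ∑ i ∈ range (n + 1), choose r i * choose s (n - i) := by
  rw [add_choose_eq n (Commute.all r s), Nat.sum_antidiagonal_eq_sum_range_succ_mk]

theorem two_pow_mul_choose (r : R) (n : ℕ) :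
    2 ^ n * choose r n = ∑ k ∈ range (n + 1), choose r k * choose (r - k) (n - k) := by
  rw [← Nat.cast_ofNat, ← Nat.cast_pow, ← Nat.sum_range_choose, Nat.cast_sum, sum_mul]
  exact sum_congr rfl fun k hk => by
    rw [← choose_smul_choose r (Nat.lt_succ_iff.mp (mem_range.mp hk)), nsmul_eq_mul]

theorem sum_two_pow_mul_choose_mul_choose (x y : R) (d : ℕ) :
    ∑ e ∈ range (d + 1), 2 ^ e * choose y e * choose x (d - e) =
      ∑ s ∈ range (d + 1), choose y s * choose (x + y - s) (d - s) := by
  simp only [two_pow_mul_choose, sum_mul]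
  rw [sum_range_sum_range_succ_eq_sum_range_sum_range_sub]
  refine sum_congr rfl fun s hs => ?_
  rw [show x + y - s = (y - s) + x by ring, add_choose_eq_sum_range, mul_sum,
    Nat.sub_add_comm (Nat.lt_succ_iff.mp (mem_range.mp hs))]
  refine sum_congr rfl fun t _ => ?_
  rw [Nat.sub_sub, Nat.add_sub_cancel_left]
  ring

end Ring

namespace PowerSeries

open Ring (choose choose_eq_neg_one_pow_mul_choose)

theorem sum_range_triple_eq_coeff_binomialSeries (a v m n : R) (d : ℕ) :
    ∑ i ∈ range (d + 1), ∑ j ∈ range (d - i + 1), ∑ k ∈ range (j + 1),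
        (-1 : R) ^ (i + j) * 2 ^ (d - j + k) * choose (a - v) i *
          choose ((d : R) + 3 - v - i - j) (d - i - j) * choose m k * choose n (j - k) =
      coeff d (rescale (-2) (binomialSeries R (a + m - 4)) * rescale (-1) (binomialSeries R n)) := by
  have hsplit : rescale (-2) (binomialSeries R (a + m - 4)) * rescale (-1) (binomialSeries R n) =
      rescale (-2) (binomialSeries R (a - v)) * ((rescale (-2) (binomialSeries R m) *
        rescale (-1) (binomialSeries R n)) * rescale (-2) (binomialSeries R (v - 4))) := by
    rw [show a + m - 4 = a - v + m + (v - 4) by ring, binomialSeries_add, binomialSeries_add,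
      map_mul, map_mul]
    ring
  rw [hsplit, coeff_mul_eq_sum_range]
  refine sum_congr rfl fun i hi => ?_
  rw [coeff_mul_eq_sum_range, mul_sum]
  refine sum_congr rfl fun j hj => ?_
  rw [coeff_mul_eq_sum_range, sum_mul, mul_sum]
  refine sum_congr rfl fun k hk => ?_
  obtain ⟨e, rfl⟩ := Nat.exists_eq_add_of_le (Nat.lt_succ_iff.mp (mem_range.mp hk))
  obtain ⟨b, rfl⟩ : ∃ b, d = i + (k + e) + b :=
    ⟨d - i - (k + e), by have := mem_range.mp hi; have := mem_range.mp hj; omega⟩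
  simp only [coeff_rescale, binomialSeries_coeff, smul_eq_mul, mul_one]
  rw [choose_eq_neg_one_pow_mul_choose (_ + 3 - v - _ - _),
    show i + (k + e) + b - i - (k + e) = b by omega,
    show i + (k + e) + b - (k + e) + k = i + b + k by omega,
    show (b : R) - 1 - ((i + (k + e) + b : ℕ) + 3 - v - i - (k + e : ℕ)) = v - 4 by push_cast; ring,
    Nat.add_sub_cancel_left]
  simp only [neg_pow (2 : R)]
  ring

theorem coeff_rescale_neg_two_mul_rescale_neg_one (x y : R) (d : ℕ) :
    coeff d (rescale (-2) (binomialSeries R y) * rescale (-1) (binomialSeries R x)) =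
      (-1) ^ d * ∑ s ∈ range (d + 1), choose y s * choose (x + y - s) (d - s) := by
  rw [coeff_mul_eq_sum_range, ← Ring.sum_two_pow_mul_choose_mul_choose, mul_sum]
  refine sum_congr rfl fun e he => ?_
  obtain ⟨t, rfl⟩ := Nat.exists_eq_add_of_le (Nat.lt_succ_iff.mp (mem_range.mp he))
  simp only [coeff_rescale, binomialSeries_coeff, smul_eq_mul, mul_one, neg_pow (2 : R),
    Nat.add_sub_cancel_left]
  ring

end PowerSeries

end

theorem two_pow_mul_jacobiZero (a b : ℚ) (d : ℕ) :
    2 ^ d * jacobiZero a b d =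
      (-1) ^ d * ∑ s ∈ range (d + 1), Ring.choose (d + b) s * Ring.choose (-1 - a - s) (d - s) := by
  rw [jacobiZero, ← mul_assoc, ← mul_pow, show (2 : ℚ) * (1 / 2) = 1 by norm_num, one_pow,
    one_mul, ← sum_range_reflect, mul_sum]
  refine sum_congr rfl fun s hs => ?_
  obtain ⟨t, rfl⟩ := Nat.exists_eq_add_of_le (Nat.lt_succ_iff.mp (mem_range.mp hs))
  simp only [qchoose_eq_choose, add_tsub_cancel_right, Nat.add_sub_cancel_left]
  rw [Ring.choose_eq_neg_one_pow_mul_choose ((s + t : ℕ) + a),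
    show (t : ℚ) - 1 - ((s + t : ℕ) + a) = -1 - a - s by push_cast; ring]
  ring

theorem combinatorial_factor_jacobi_general (A M N : ℤ) (d : ℕ) (v : ℕ) :
    ∑ i ∈ Finset.range (d + 1), ∑ j ∈ Finset.range (d - i + 1), ∑ k ∈ Finset.range (j + 1),
        (-1 : ℚ) ^ (i + j) * 2 ^ (d - j + k) *
          qchoose ((A : ℚ) - (v : ℚ)) i *
          qchoose ((d : ℚ) + 3 - (v : ℚ) - (i : ℚ) - (j : ℚ)) (d - i - j) *
          qchoose (M : ℚ) k * qchoose (N : ℚ) (j - k)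
      = 2 ^ d * jacobiZero (3 - (N : ℚ) - (A : ℚ) - (M : ℚ)) ((A : ℚ) + (M : ℚ) - 4 - (d : ℚ)) d := by
  simp only [qchoose_eq_choose]
  rw [PowerSeries.sum_range_triple_eq_coeff_binomialSeries,
    PowerSeries.coeff_rescale_neg_two_mul_rescale_neg_one, two_pow_mul_jacobiZero]
  congr 1
  refine sum_congr rfl fun s _ => ?_
  congr 2 <;> ring

theorem combinatorial_factor_jacobi (A M N : ℤ) (d : ℕ) (v : ℕ) (hv : v ≤ 3) :
    ∑ i ∈ Finset.range (d + 1), ∑ j ∈ Finset.range (d - i + 1), ∑ k ∈ Finset.range (j + 1),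
        (-1 : ℚ) ^ (i + j) * 2 ^ (d - j + k) *
          qchoose ((A : ℚ) - (v : ℚ)) i *
          qchoose ((d : ℚ) + 3 - (v : ℚ) - (i : ℚ) - (j : ℚ)) (d - i - j) *
          qchoose (M : ℚ) k * qchoose (N : ℚ) (j - k)
      = 2 ^ d * jacobiZero (3 - (N : ℚ) - (A : ℚ) - (M : ℚ)) ((A : ℚ) + (M : ℚ) - 4 - (d : ℚ)) d :=
  combinatorial_factor_jacobi_general A M N d v
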